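/- Let P_T > 0 and let 𝒬 = { Q ∈ ℂ^{Nt×Nt} : Q Hermitian, Q ⪰ 0, tr(Q) ≤ P_T }. Let X ∈ ℂ^{Nt×Nt} be Hermitian with eigendecomposition X = U diag(x₁,…,x_{N_t}) U† (U unitary), and suppose Σᵢ max{xᵢ, 0} ≥ P_T (so the trace constraint is active). Let c ∈ ℝ be the unique root of Σᵢ max{xᵢ − c, 0} = P_T. Then the Frobenius-norm projection of X onto 𝒬, i.e. the unique minimizer of ‖Q − X‖_F over Q ∈ 𝒬, is Π_𝒬(X) = U diag(max{x₁ − c, 0}, …, max{x_{N_t} − c, 0}) U†. -/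

import Mathlib

/-!
In the eigenbasis of `X` the candidate `P` is diagonal with entries `dᵢ = max (xᵢ - c) 0`, and
`c ≥ 0` because the trace constraint is active. For a feasible `Q`, put `R = Uᴴ Q U`; then
`Rᵢᵢ ≥ 0`, and each term of `re tr ((P - X)ᴴ (Q - P)) = ∑ (dᵢ - xᵢ) (Rᵢᵢ - dᵢ)` is at least
`-c (Rᵢᵢ - dᵢ)`, so the sum is at least `c (∑ dᵢ - tr R) ≥ 0`. Expanding
`‖Q - X‖² = ‖P - X‖² + 2 re tr ((P - X)ᴴ (Q - P)) + ‖Q - P‖²` gives the strict inequality.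
-/

open Matrix
open scoped ComplexOrder

/-- The Frobenius norm `‖M‖_F = sqrt(tr(Mᴴ M))` of a complex matrix. -/
noncomputable def frobNorm {n : ℕ} (M : Matrix (Fin n) (Fin n) ℂ) : ℝ :=
  Real.sqrt (Matrix.trace (Mᴴ * M)).re

namespace Matrix

section Unitary

variable {n α : Type*} [Fintype n] [DecidableEq n] [CommRing α] [StarRing α]
  {U : Matrix n n α}

theorem trace_conj_of_mem_unitaryGroup (hU : U ∈ unitaryGroup n α) (A : Matrix n n α) :
    (U * A * Uᴴ).trace = A.trace := by
  rw [trace_mul_cycle, show Uᴴ * U = 1 from hU.1, Matrix.one_mul]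

theorem trace_conjTranspose_conj_of_mem_unitaryGroup (hU : U ∈ unitaryGroup n α)
    (A : Matrix n n α) : (Uᴴ * A * U).trace = A.trace := by
  rw [trace_mul_cycle, show U * Uᴴ = 1 from hU.2, Matrix.one_mul]

theorem conjTranspose_mul_conj_mul_of_mem_unitaryGroup (hU : U ∈ unitaryGroup n α)
    (A : Matrix n n α) : Uᴴ * (U * A * Uᴴ) * U = A := by
  simp only [Matrix.mul_assoc, show Uᴴ * U = 1 from hU.1, Matrix.mul_one,
    ← Matrix.mul_assoc Uᴴ U, Matrix.one_mul]

end Unitary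

section RCLike

variable {m n 𝕜 : Type*} [Fintype m] [Fintype n] [RCLike 𝕜]

theorem re_trace_conjTranspose_mul_self_add (A B : Matrix m n 𝕜) :
    RCLike.re ((A + B)ᴴ * (A + B)).trace =
      RCLike.re (Aᴴ * A).trace + 2 * RCLike.re (Aᴴ * B).trace + RCLike.re (Bᴴ * B).trace := by
  have hBA : (Bᴴ * A).trace = star (Aᴴ * B).trace := by
    rw [← trace_conjTranspose, conjTranspose_mul, conjTranspose_conjTranspose]
  simp only [conjTranspose_add, Matrix.add_mul, Matrix.mul_add, trace_add, map_add, hBA,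
    RCLike.star_def, RCLike.conj_re]
  ring

theorem re_trace_conjTranspose_mul_self_nonneg (A : Matrix m n 𝕜) :
    0 ≤ RCLike.re (Aᴴ * A).trace :=
  (RCLike.nonneg_iff.mp (posSemidef_conjTranspose_mul_self A).trace_nonneg).1

theorem re_trace_conjTranspose_mul_self_pos {A : Matrix m n 𝕜} (hA : A ≠ 0) :
    0 < RCLike.re (Aᴴ * A).trace := by
  have hne : (Aᴴ * A).trace ≠ 0 := trace_conjTranspose_mul_self_eq_zero_iff.not.mpr hA
  exact (RCLike.pos_iff.mp
    ((posSemidef_conjTranspose_mul_self A).trace_nonneg.lt_of_ne hne.symm)).1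

theorem trace_conjTranspose_conj_mul (U : Matrix m n 𝕜) (A : Matrix n n 𝕜)
    (B : Matrix m m 𝕜) : ((U * A * Uᴴ)ᴴ * B).trace = (Aᴴ * (Uᴴ * B * U)).trace := by
  simp only [conjTranspose_mul, conjTranspose_conjTranspose, Matrix.mul_assoc]
  rw [trace_mul_comm]
  simp only [Matrix.mul_assoc]

theorem re_trace_diagonal_ofReal_mul [DecidableEq n] (a : n → ℝ) (B : Matrix n n 𝕜) :
    RCLike.re ((diagonal fun i => (a i : 𝕜))ᴴ * B).trace = ∑ i, a i * RCLike.re (B i i) := by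
  simp [trace, diagonal_conjTranspose, map_sum]

end RCLike

end Matrix

theorem frobNorm_sub_lt_of_re_trace_nonneg {n : ℕ} {P Q X : Matrix (Fin n) (Fin n) ℂ}
    (hQP : Q ≠ P) (h : 0 ≤ ((P - X)ᴴ * (Q - P)).trace.re) :
    frobNorm (P - X) < frobNorm (Q - X) := by
  have hsplit := re_trace_conjTranspose_mul_self_add (P - X) (Q - P)
  have hpos := re_trace_conjTranspose_mul_self_pos (sub_ne_zero.mpr hQP)
  have hnonneg := re_trace_conjTranspose_mul_self_nonneg (P - X)
  simp only [RCLike.re_to_complex, sub_add_sub_cancel'] at hsplit hpos hnonneg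
  exact Real.sqrt_lt_sqrt hnonneg (by linarith)

section WaterFilling

variable {ι : Type*} [Fintype ι] {x : ι → ℝ} {c : ℝ}

theorem waterLevel_nonneg {P : ℝ} (hP : 0 < P) (hactive : P ≤ ∑ i, max (x i) 0)
    (hc : ∑ i, max (x i - c) 0 = P) : 0 ≤ c := by
  by_contra! hneg
  obtain ⟨i, -, hi⟩ : ∃ i ∈ Finset.univ, 0 < max (x i - c) 0 :=
    Finset.exists_lt_of_sum_lt (by simpa [hc] using hP)
  have hlt : ∑ i, max (x i) 0 < ∑ i, max (x i - c) 0 :=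
    Finset.sum_lt_sum (fun j _ => max_le_max (by linarith) le_rfl)
      ⟨i, Finset.mem_univ i, max_lt (by linarith [le_max_left (x i - c) 0]) hi⟩
  linarith

theorem sum_waterFill_sub_mul_sub_nonneg (hc : 0 ≤ c) {r : ι → ℝ} (hr : ∀ i, 0 ≤ r i)
    (hsum : ∑ i, r i ≤ ∑ i, max (x i - c) 0) :
    0 ≤ ∑ i, (max (x i - c) 0 - x i) * (r i - max (x i - c) 0) := by
  have hterm (i : ι) : -c * (r i - max (x i - c) 0) ≤
      (max (x i - c) 0 - x i) * (r i - max (x i - c) 0) := by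
    rcases le_total (x i) c with h | h
    · rw [max_eq_right (sub_nonpos.mpr h)]
      nlinarith [hr i]
    · rw [max_eq_left (sub_nonneg.mpr h)]
      exact le_of_eq (by ring)
  calc 0 ≤ -c * ∑ i, (r i - max (x i - c) 0) := by
        rw [Finset.sum_sub_distrib]; nlinarith
    _ ≤ _ := by rw [Finset.mul_sum]; exact Finset.sum_le_sum fun i _ => hterm i

end WaterFilling

theorem re_trace_waterFill_optimality {n 𝕜 : Type*} [Fintype n] [DecidableEq n] [RCLike 𝕜]
    {U Q : Matrix n n 𝕜} (hU : U ∈ unitaryGroup n 𝕜) (hQ : Q.PosSemidef) {x : n → ℝ} {c : ℝ}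
    (hc : 0 ≤ c) (hQtr : RCLike.re Q.trace ≤ ∑ i, max (x i - c) 0) :
    0 ≤ RCLike.re ((U * diagonal (fun i => ((max (x i - c) 0 - x i : ℝ) : 𝕜)) * Uᴴ)ᴴ *
      (Q - U * diagonal (fun i => ((max (x i - c) 0 : ℝ) : 𝕜)) * Uᴴ)).trace := by
  have hR : (Uᴴ * Q * U).PosSemidef := hQ.conjTranspose_mul_mul_same U
  have htrR : ∑ i, RCLike.re ((Uᴴ * Q * U) i i) ≤ ∑ i, max (x i - c) 0 := by
    rw [← trace_conjTranspose_conj_of_mem_unitaryGroup hU, trace, map_sum] at hQtr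
    exact hQtr
  rw [trace_conjTranspose_conj_mul, Matrix.mul_sub, Matrix.sub_mul,
    conjTranspose_mul_conj_mul_of_mem_unitaryGroup hU, re_trace_diagonal_ofReal_mul]
  simpa using sum_waterFill_sub_mul_sub_nonneg hc
    (fun i => (RCLike.nonneg_iff.mp hR.diag_nonneg).1) htrR

theorem stmt_12_general {Nt : ℕ} (PT : ℝ) (hPT : 0 < PT)
    (X U : Matrix (Fin Nt) (Fin Nt) ℂ) (x : Fin Nt → ℝ)
    (hU : U ∈ Matrix.unitaryGroup (Fin Nt) ℂ)
    (hdecomp : X = U * Matrix.diagonal (fun i => (x i : ℂ)) * Uᴴ)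
    (hactive : PT ≤ ∑ i, max (x i) 0)
    (c : ℝ) (hc : ∑ i, max (x i - c) 0 = PT) :
    (U * Matrix.diagonal (fun i => ((max (x i - c) 0 : ℝ) : ℂ)) * Uᴴ).PosSemidef ∧
    (Matrix.trace (U * Matrix.diagonal (fun i => ((max (x i - c) 0 : ℝ) : ℂ)) * Uᴴ)).re ≤ PT ∧
    ∀ Q : Matrix (Fin Nt) (Fin Nt) ℂ, Q.PosSemidef → (Matrix.trace Q).re ≤ PT →
      Q ≠ U * Matrix.diagonal (fun i => ((max (x i - c) 0 : ℝ) : ℂ)) * Uᴴ →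
      frobNorm (U * Matrix.diagonal (fun i => ((max (x i - c) 0 : ℝ) : ℂ)) * Uᴴ - X)
        < frobNorm (Q - X) := by
  refine ⟨(posSemidef_diagonal_iff.mpr fun i => ?_).mul_mul_conjTranspose_same U, ?_,
    fun Q hQ hQtr hQP => frobNorm_sub_lt_of_re_trace_nonneg hQP ?_⟩
  · exact_mod_cast le_max_right (x i - c) 0
  · simp [trace_conj_of_mem_unitaryGroup hU, hc]
  have hPX : U * diagonal (fun i => ((max (x i - c) 0 : ℝ) : ℂ)) * Uᴴ - X =
      U * diagonal (fun i => ((max (x i - c) 0 - x i : ℝ) : ℂ)) * Uᴴ := by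
    simp only [hdecomp, ← Matrix.sub_mul, ← Matrix.mul_sub, diagonal_sub, Complex.ofReal_sub]
  rw [hPX]
  exact re_trace_waterFill_optimality hU hQ (waterLevel_nonneg hPT hactive hc) (hc ▸ hQtr)

/-- (Water-filling projection.) Let `X` be Hermitian with
eigendecomposition `X = U diag(x) Uᴴ` (`U` unitary, `x` real), suppose
`Σᵢ max(xᵢ, 0) ≥ P_T`, and let `c` be a root of `Σᵢ max(xᵢ − c, 0) = P_T`. Then
`Π_𝒬(X) = U diag(max(xᵢ − c, 0)) Uᴴ` is the unique Frobenius-norm projection of `X`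
onto `𝒬 = { Q ⪰ 0 : tr Q ≤ P_T }`: it lies in `𝒬` and is strictly closer to `X`
than any other point of `𝒬`. -/
theorem stmt_12 {Nt : ℕ} (PT : ℝ) (hPT : 0 < PT)
    (X U : Matrix (Fin Nt) (Fin Nt) ℂ) (x : Fin Nt → ℝ)
    (hX : X.IsHermitian)
    (hU : U ∈ Matrix.unitaryGroup (Fin Nt) ℂ)
    (hdecomp : X = U * Matrix.diagonal (fun i => (x i : ℂ)) * Uᴴ)
    (hactive : PT ≤ ∑ i, max (x i) 0)
    (c : ℝ) (hc : ∑ i, max (x i - c) 0 = PT) :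
    (U * Matrix.diagonal (fun i => ((max (x i - c) 0 : ℝ) : ℂ)) * Uᴴ).PosSemidef ∧
    (Matrix.trace (U * Matrix.diagonal (fun i => ((max (x i - c) 0 : ℝ) : ℂ)) * Uᴴ)).re ≤ PT ∧
    ∀ Q : Matrix (Fin Nt) (Fin Nt) ℂ, Q.PosSemidef → (Matrix.trace Q).re ≤ PT →
      Q ≠ U * Matrix.diagonal (fun i => ((max (x i - c) 0 : ℝ) : ℂ)) * Uᴴ →
      frobNorm (U * Matrix.diagonal (fun i => ((max (x i - c) 0 : ℝ) : ℂ)) * Uᴴ - X)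
        < frobNorm (Q - X) :=
  stmt_12_general PT hPT X U x hU hdecomp hactive c hc
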